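/- arXiv:2210.07794 — 3 statements merged into one kernel-verified Lean document; each statement's English description precedes it below -/
import Mathlib

section
/- Discrete positivity inequality for convolutions: let $\tau>0$, let $(z_i)_{i\geq 0}$ and $(\kappa_i)_{i\geq 1}$ be sequences of real numbers with $\kappa_{i+1} \leq \kappa_i$ for all $i\geq 1$, and define the discrete convolution $(\kappa * z)^c_i := \sum_{\ell=1}^i \kappa_{i+1-\ell} z_\ell \tau$ with $(\kappa * z)^c_0 := 0$ and the backward difference $\delta w_i := (w_i - w_{i-1})/\tau$. Then for every $i\geq 1$: $2\,\delta(\kappa * z)^c_i \, z_i \geq \delta(\kappa * z^2)^c_i + \kappa_i z_i^2$, where $(\kappa * z^2)^c_i := \sum_{\ell=1}^i \kappa_{i+1-\ell} z_\ell^2 \tau$. -/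
/-- Discrete convolution `(κ ∗ z)^c_i = ∑_{ℓ=1}^i κ_{i+1-ℓ} z_ℓ τ` (equal to `0` for `i = 0`). -/
def discConv (τ : ℝ) (κ z : ℕ → ℝ) (i : ℕ) : ℝ :=
  ∑ ℓ ∈ Finset.Icc 1 i, κ (i + 1 - ℓ) * z ℓ * τ

lemma tele_aux : ∀ (n : ℕ) (κ : ℕ → ℝ),
    ∑ ℓ ∈ Finset.Icc 1 n, (κ (n + 2 - ℓ) - κ (n + 1 - ℓ)) = κ (n + 1) - κ 1
  | 0, κ => by simp
  | (n + 1), κ => by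
    rw [Finset.sum_Icc_succ_top (by omega : 1 ≤ n + 1)]
    have h := tele_aux n (fun m => κ (m + 1))
    have hcongr : ∑ ℓ ∈ Finset.Icc 1 n, (κ (n + 1 + 2 - ℓ) - κ (n + 1 + 1 - ℓ)) =
        ∑ ℓ ∈ Finset.Icc 1 n, (κ (n + 2 - ℓ + 1) - κ (n + 1 - ℓ + 1)) := by
      refine Finset.sum_congr rfl fun ℓ hℓ => ?_
      simp only [Finset.mem_Icc] at hℓ
      congr 2 <;> omega
    rw [hcongr, h]
    have h1 : n + 1 + 2 - (n + 1) = 2 := by omega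
    have h2 : n + 1 + 1 - (n + 1) = 1 := by omega
    rw [h1, h2]
    ring

theorem discrete_positivity (τ : ℝ) (hτ : 0 < τ) (κ z : ℕ → ℝ)
    (hκ : ∀ i : ℕ, 1 ≤ i → κ (i + 1) ≤ κ i) (i : ℕ) (hi : 1 ≤ i) :
    2 * ((discConv τ κ z i - discConv τ κ z (i - 1)) / τ) * z i ≥
      (discConv τ κ (fun ℓ => (z ℓ) ^ 2) i - discConv τ κ (fun ℓ => (z ℓ) ^ 2) (i - 1)) / τ
        + κ i * (z i) ^ 2 := by
  obtain ⟨n, rfl⟩ : ∃ n, i = n + 1 := ⟨i - 1, by omega⟩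
  simp only [Nat.add_sub_cancel]
  have key : ∀ w : ℕ → ℝ, (discConv τ κ w (n + 1) - discConv τ κ w n) / τ =
      κ 1 * w (n + 1) + ∑ ℓ ∈ Finset.Icc 1 n, (κ (n + 2 - ℓ) - κ (n + 1 - ℓ)) * w ℓ := by
    intro w
    unfold discConv
    rw [Finset.sum_Icc_succ_top (by omega : 1 ≤ n + 1)]
    have h1 : n + 1 + 1 - (n + 1) = 1 := by omega
    rw [h1]
    have hcongr : ∑ ℓ ∈ Finset.Icc 1 n, κ (n + 1 + 1 - ℓ) * w ℓ * τ =
        ∑ ℓ ∈ Finset.Icc 1 n, κ (n + 2 - ℓ) * w ℓ * τ := by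
      refine Finset.sum_congr rfl fun ℓ hℓ => ?_
      simp only [Finset.mem_Icc] at hℓ
      have hx : n + 1 + 1 - ℓ = n + 2 - ℓ := by omega
      rw [hx]
    rw [hcongr]
    rw [div_eq_iff hτ.ne', add_mul, Finset.sum_mul]
    have hsplit : ∑ ℓ ∈ Finset.Icc 1 n, (κ (n + 2 - ℓ) - κ (n + 1 - ℓ)) * w ℓ * τ =
        ∑ ℓ ∈ Finset.Icc 1 n, (κ (n + 2 - ℓ) * w ℓ * τ - κ (n + 1 - ℓ) * w ℓ * τ) :=
      Finset.sum_congr rfl fun ℓ _ => by ring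
    rw [hsplit, Finset.sum_sub_distrib]
    ring
  rw [key z, key (fun ℓ => z ℓ ^ 2)]
  have htel := tele_aux n κ
  have hκn : κ (n + 1) = (∑ ℓ ∈ Finset.Icc 1 n, (κ (n + 2 - ℓ) - κ (n + 1 - ℓ))) + κ 1 := by
    linarith
  rw [hκn]
  have main : 0 ≤ ∑ ℓ ∈ Finset.Icc 1 n,
      (κ (n + 1 - ℓ) - κ (n + 2 - ℓ)) * (z ℓ - z (n + 1)) ^ 2 := by
    refine Finset.sum_nonneg fun ℓ hℓ => ?_
    simp only [Finset.mem_Icc] at hℓ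
    have h1 : 1 ≤ n + 1 - ℓ := by omega
    have h2 := hκ (n + 1 - ℓ) h1
    have h3 : n + 1 - ℓ + 1 = n + 2 - ℓ := by omega
    rw [h3] at h2
    exact mul_nonneg (by linarith) (sq_nonneg _)
  have expand : ∑ ℓ ∈ Finset.Icc 1 n,
      (κ (n + 1 - ℓ) - κ (n + 2 - ℓ)) * (z ℓ - z (n + 1)) ^ 2 =
      2 * z (n + 1) * (∑ ℓ ∈ Finset.Icc 1 n, (κ (n + 2 - ℓ) - κ (n + 1 - ℓ)) * z ℓ)
        - (∑ ℓ ∈ Finset.Icc 1 n, (κ (n + 2 - ℓ) - κ (n + 1 - ℓ)) * z ℓ ^ 2)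
        - (∑ ℓ ∈ Finset.Icc 1 n, (κ (n + 2 - ℓ) - κ (n + 1 - ℓ))) * z (n + 1) ^ 2 := by
    rw [Finset.mul_sum, Finset.sum_mul, ← Finset.sum_sub_distrib, ← Finset.sum_sub_distrib]
    exact Finset.sum_congr rfl fun ℓ _ => by ring
  rw [expand] at main
  nlinarith [main]
end

section
/- Summation identity for the multinomial Mittag-Leffler function: for positive constants $\alpha_1,\dots,\alpha_m$, complex numbers $z_1,\dots,z_m$ and $\beta > 0$, it holds that $\sum_{j=1}^m z_j\, E_{(\alpha_1,\dots,\alpha_m),\beta+\alpha_j}(z_1,\dots,z_m) + \frac{1}{\Gamma(\beta)} = E_{(\alpha_1,\dots,\alpha_m),\beta}(z_1,\dots,z_m)$. -/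
open Finset Real
open scoped Nat


lemma gamma_mono {x y : ℝ} (hx : 2 ≤ x) (hxy : x ≤ y) : Real.Gamma x ≤ Real.Gamma y :=
  Real.Gamma_strictMonoOn_Ici.monotoneOn hx (hx.trans hxy) hxy

lemma gamma_ratio {x : ℝ} (hx : 2 ≤ x) {a : ℝ} (ha : 0 < a) :
    Real.Gamma x * (x - 1) ^ a ≤ Real.Gamma (x + a) := by
  have h0 : (0:ℝ) < x - 1 := by linarith
  have hx0 : (0:ℝ) < x := by linarith
  have hxa : (0:ℝ) < x + a := by linarith
  have hslope := Real.convexOn_log_Gamma.slope_mono_adjacent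
    (x := x - 1) (y := x) (z := x + a) (Set.mem_Ioi.2 h0) (Set.mem_Ioi.2 hxa)
    (by linarith) (by linarith)
  have hrec : Real.Gamma x = (x - 1) * Real.Gamma (x - 1) := by
    have := Real.Gamma_add_one (s := x - 1) h0.ne'
    rw [sub_add_cancel] at this
    exact this
  have hΓx : (0:ℝ) < Real.Gamma x := Real.Gamma_pos_of_pos hx0
  have hΓx1 : (0:ℝ) < Real.Gamma (x - 1) := Real.Gamma_pos_of_pos h0
  have hΓxa : (0:ℝ) < Real.Gamma (x + a) := Real.Gamma_pos_of_pos hxa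
  simp only [Function.comp_apply] at hslope
  have hlog : Real.log (Real.Gamma x) - Real.log (Real.Gamma (x - 1)) = Real.log (x - 1) := by
    rw [hrec, Real.log_mul h0.ne' hΓx1.ne']; ring
  have hden1 : x - (x - 1) = 1 := by ring
  rw [hden1, div_one, hlog] at hslope
  have hfinal : Real.log (x - 1) * a + Real.log (Real.Gamma x) ≤ Real.log (Real.Gamma (x + a)) := by
    have h2 : (Real.log (Real.Gamma (x + a)) - Real.log (Real.Gamma x)) / (x + a - x) =
        (Real.log (Real.Gamma (x + a)) - Real.log (Real.Gamma x)) / a := by ring_nf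
    rw [h2] at hslope
    have := (le_div_iff₀ ha).mp hslope
    linarith
  calc Real.Gamma x * (x - 1) ^ a
      = Real.exp (Real.log (x - 1) * a + Real.log (Real.Gamma x)) := by
        rw [Real.exp_add, Real.rpow_def_of_pos h0, Real.exp_log hΓx]; ring
    _ ≤ Real.exp (Real.log (Real.Gamma (x + a))) := Real.exp_le_exp.2 hfinal
    _ = Real.Gamma (x + a) := Real.exp_log hΓxa


lemma summable_W {a A R β : ℝ} (ha : 0 < a) (hA : 0 < A) (hβ : 0 < β) (hR : 0 ≤ R) :
    Summable (fun n : ℕ => R ^ n * ((β + A * n) * (β + A * n + 1)) / Real.Gamma (β + a * n + 2)) := by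
  set W : ℕ → ℝ := fun n => R ^ n * ((β + A * n) * (β + A * n + 1)) / Real.Gamma (β + a * n + 2) with hW
  have hΓpos : ∀ n : ℕ, (0:ℝ) < Real.Gamma (β + a * n + 2) := fun n =>
    Real.Gamma_pos_of_pos (by positivity)
  have hWnn : ∀ n, 0 ≤ W n := fun n => by
    have := hΓpos n; positivity
  have c2 : (0:ℝ) < (1 + A / β) * (1 + A / β) := by positivity
  -- tendsto of (β + a n + 1)^a to ∞
  have htt : Filter.Tendsto (fun n : ℕ => (β + a * n + 1) ^ a) Filter.atTop Filter.atTop := by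
    apply (tendsto_rpow_atTop ha).comp
    have h1 : Filter.Tendsto (fun n : ℕ => a * (n:ℝ)) Filter.atTop Filter.atTop :=
      (tendsto_natCast_atTop_atTop (R := ℝ)).const_mul_atTop ha
    have h2 := Filter.tendsto_atTop_add_const_left Filter.atTop β h1
    have h3 := Filter.tendsto_atTop_add_const_right Filter.atTop 1 h2
    exact h3
  apply summable_of_ratio_norm_eventually_le (r := 1/2) (by norm_num)
  filter_upwards [htt.eventually_ge_atTop (2 * (R * ((1 + A / β) * (1 + A / β))))] with n hn
  rw [Real.norm_of_nonneg (hWnn _), Real.norm_of_nonneg (hWnn _)]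
  have hP : (β + A * (n+1:ℕ)) * (β + A * (n+1:ℕ) + 1) ≤
      ((1 + A / β) * (1 + A / β)) * ((β + A * n) * (β + A * n + 1)) := by
    push_cast
    show (β + A * ((n:ℝ) + 1)) * (β + A * ((n:ℝ) + 1) + 1) ≤ _
    rw [show β + A * ((n:ℝ) + 1) = β + A * n + A by ring]
    have h1 : β + A * n + A ≤ (1 + A / β) * (β + A * n) := by
      have : A ≤ (A / β) * (β + A * n) := by
        rw [div_mul_eq_mul_div, le_div_iff₀ hβ]
        nlinarith [mul_nonneg hA.le (Nat.cast_nonneg (α := ℝ) n)]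
      nlinarith
    have h2 : β + A * n + A + 1 ≤ (1 + A / β) * (β + A * n + 1) := by
      have : A ≤ (A / β) * (β + A * n + 1) := by
        rw [div_mul_eq_mul_div, le_div_iff₀ hβ]
        nlinarith [mul_nonneg hA.le (Nat.cast_nonneg (α := ℝ) n)]
      nlinarith
    have hpos1 : (0:ℝ) ≤ β + A * n + A := by positivity
    have hpos2 : (0:ℝ) ≤ (1 + A / β) * (β + A * n) := le_trans hpos1 h1
    calc (β + A * n + A) * (β + A * n + A + 1)
        ≤ ((1 + A / β) * (β + A * n)) * ((1 + A / β) * (β + A * n + 1)) := by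
          apply mul_le_mul h1 h2 (by positivity) hpos2

      _ = (1 + A / β) * (1 + A / β) * ((β + A * n) * (β + A * n + 1)) := by ring
  -- Gamma bound
  have hΓ : Real.Gamma (β + a * n + 2) * (β + a * n + 1) ^ a ≤ Real.Gamma (β + a * (n+1:ℕ) + 2) := by
    have h2le : (2:ℝ) ≤ β + a * n + 2 := by
      have := mul_nonneg ha.le (Nat.cast_nonneg (α := ℝ) n); linarith
    have := gamma_ratio (x := β + a * n + 2) h2le ha
    have he : β + a * n + 2 + a = β + a * (n+1:ℕ) + 2 := by push_cast; ring
    have he2 : β + a * n + 2 - 1 = β + a * n + 1 := by ring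
    rw [he, he2] at this
    exact this
  -- main inequality
  show W (n+1) ≤ 1/2 * W n
  rw [hW]
  simp only []
  rw [mul_div_assoc']
  rw [div_le_div_iff₀ (hΓpos _) (hΓpos _)]
  have hrpos : (0:ℝ) < (β + a * n + 1) ^ a := by
    apply Real.rpow_pos_of_pos; positivity
  have key : R ^ (n+1) * ((β + A * (n+1:ℕ)) * (β + A * (n+1:ℕ) + 1)) * Real.Gamma (β + a * n + 2)
      ≤ 1/2 * (R ^ n * ((β + A * n) * (β + A * n + 1))) *
        (Real.Gamma (β + a * n + 2) * (β + a * n + 1) ^ a) := by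
    have hRn : (0:ℝ) ≤ R ^ n := by positivity
    have hstep : R ^ (n+1) * ((β + A * (n+1:ℕ)) * (β + A * (n+1:ℕ) + 1)) ≤
        1/2 * (R ^ n * ((β + A * n) * (β + A * n + 1))) * (β + a * n + 1) ^ a := by
      have h3 : R * ((β + A * (n+1:ℕ)) * (β + A * (n+1:ℕ) + 1)) ≤
          R * (((1 + A / β) * (1 + A / β)) * ((β + A * n) * (β + A * n + 1))) :=
        mul_le_mul_of_nonneg_left hP hR
      have hPn : (0:ℝ) ≤ (β + A * n) * (β + A * n + 1) := by positivity
      have h4 : R * ((1 + A / β) * (1 + A / β)) ≤ 1/2 * (β + a * n + 1) ^ a := by linarith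
      calc R ^ (n+1) * ((β + A * (n+1:ℕ)) * (β + A * (n+1:ℕ) + 1))
          = R ^ n * (R * ((β + A * (n+1:ℕ)) * (β + A * (n+1:ℕ) + 1))) := by ring
        _ ≤ R ^ n * (R * (((1 + A / β) * (1 + A / β)) * ((β + A * n) * (β + A * n + 1)))) :=
            mul_le_mul_of_nonneg_left h3 hRn
        _ = (R * ((1 + A / β) * (1 + A / β))) * (R ^ n * ((β + A * n) * (β + A * n + 1))) := by ring
        _ ≤ (1/2 * (β + a * n + 1) ^ a) * (R ^ n * ((β + A * n) * (β + A * n + 1))) := by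
            apply mul_le_mul_of_nonneg_right h4 (by positivity)
        _ = 1/2 * (R ^ n * ((β + A * n) * (β + A * n + 1))) * (β + a * n + 1) ^ a := by ring
    calc R ^ (n+1) * ((β + A * (n+1:ℕ)) * (β + A * (n+1:ℕ) + 1)) * Real.Gamma (β + a * n + 2)
        ≤ (1/2 * (R ^ n * ((β + A * n) * (β + A * n + 1))) * (β + a * n + 1) ^ a) *
            Real.Gamma (β + a * n + 2) := mul_le_mul_of_nonneg_right hstep (hΓpos n).le
      _ = 1/2 * (R ^ n * ((β + A * n) * (β + A * n + 1))) *
            (Real.Gamma (β + a * n + 2) * (β + a * n + 1) ^ a) := by ring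
  calc R ^ (n+1) * ((β + A * (n+1:ℕ)) * (β + A * (n+1:ℕ) + 1)) * Real.Gamma (β + a * n + 2)
      ≤ 1/2 * (R ^ n * ((β + A * n) * (β + A * n + 1))) *
        (Real.Gamma (β + a * n + 2) * (β + a * n + 1) ^ a) := key
    _ ≤ 1/2 * (R ^ n * ((β + A * n) * (β + A * n + 1))) * Real.Gamma (β + a * (n+1:ℕ) + 2) := by
        apply mul_le_mul_of_nonneg_left hΓ; positivity


lemma summable_F (m : ℕ) (α : Fin m → ℝ) (hα : ∀ j, 0 < α j) (β : ℝ) (hβ : 0 < β)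
    (z : Fin m → ℂ) :
    Summable (fun k : Fin m → ℕ => (Nat.multinomial Finset.univ k : ℂ) * (∏ j, z j ^ k j) /
      (Real.Gamma (β + ∑ j, α j * (k j : ℝ)) : ℂ)) := by
  rcases isEmpty_or_nonempty (Fin m) with hm | hm
  · haveI : Finite (Fin m → ℕ) := Finite.of_subsingleton
    exact Summable.of_finite
  apply Summable.of_norm
  -- notation
  set N : (Fin m → ℕ) → ℝ := fun k => ‖(Nat.multinomial Finset.univ k : ℂ) * (∏ j, z j ^ k j) /
      (Real.Gamma (β + ∑ j, α j * (k j : ℝ)) : ℂ)‖ with hN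
  have hNnn : ∀ k, 0 ≤ N k := fun k => norm_nonneg _
  set a : ℝ := Finset.univ.inf' ⟨hm.some, mem_univ _⟩ α with ha'
  set A : ℝ := Finset.univ.sup' ⟨hm.some, mem_univ _⟩ α with hA'
  have ha : 0 < a := by
    rw [ha']; exact (Finset.lt_inf'_iff _).2 fun j _ => hα j
  have haj : ∀ j, a ≤ α j := fun j => Finset.inf'_le _ (mem_univ j)
  have hAj : ∀ j, α j ≤ A := fun j => Finset.le_sup' _ (mem_univ j)
  have hA : 0 < A := lt_of_lt_of_le (hα hm.some) (hAj hm.some)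
  set R : ℝ := ∑ j, ‖z j‖ with hR'
  have hR : 0 ≤ R := Finset.sum_nonneg fun j _ => norm_nonneg _
  set W : ℕ → ℝ := fun n => R ^ n * ((β + A * n) * (β + A * n + 1)) / Real.Gamma (β + a * n + 2)
    with hW
  have hWs : Summable W := summable_W ha hA hβ hR
  have hWnn : ∀ n, 0 ≤ W n := fun n => by
    have : (0:ℝ) < Real.Gamma (β + a * n + 2) := Real.Gamma_pos_of_pos (by positivity)
    positivity
  -- norm formula
  have hNeq : ∀ k : Fin m → ℕ, N k = (Nat.multinomial Finset.univ k : ℝ) * (∏ j, ‖z j‖ ^ k j) /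
      Real.Gamma (β + ∑ j, α j * (k j : ℝ)) := by
    intro k
    have hΓpos : 0 < Real.Gamma (β + ∑ j, α j * (k j : ℝ)) := by
      apply Real.Gamma_pos_of_pos
      have : 0 ≤ ∑ j, α j * (k j : ℝ) :=
        Finset.sum_nonneg fun j _ => mul_nonneg (hα j).le (Nat.cast_nonneg _)
      linarith
    rw [hN]
    simp only [norm_div, norm_mul, Complex.norm_natCast, Complex.norm_real]
    rw [Real.norm_of_nonneg hΓpos.le]
    congr 1
    rw [norm_prod]
    congr 1
    exact Finset.prod_congr rfl fun j _ => norm_pow _ _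
  -- per-n bound
  have hbound : ∀ n : ℕ, ∑ k ∈ Finset.piAntidiag Finset.univ n, N k ≤ W n := by
    intro n
    have hΓan : 0 < Real.Gamma (β + a * n + 2) := Real.Gamma_pos_of_pos (by positivity)
    have step : ∀ k ∈ Finset.piAntidiag Finset.univ n, N k ≤
        ((Nat.multinomial Finset.univ k : ℝ) * (∏ j, ‖z j‖ ^ k j)) *
          (((β + A * n) * (β + A * n + 1)) / Real.Gamma (β + a * n + 2)) := by
      intro k hk
      rw [Finset.mem_piAntidiag] at hk
      obtain ⟨hks, -⟩ := hk
      set s : ℝ := ∑ j, α j * (k j : ℝ) with hs'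
      have hs0 : 0 ≤ s := Finset.sum_nonneg fun j _ => mul_nonneg (hα j).le (Nat.cast_nonneg _)
      have hcast : ∑ j, (k j : ℝ) = (n : ℝ) := by
        rw [← Nat.cast_sum, hks]
      have hslb : a * n ≤ s := by
        rw [hs', ← hcast, Finset.mul_sum]
        exact Finset.sum_le_sum fun j _ =>
          mul_le_mul_of_nonneg_right (haj j) (Nat.cast_nonneg _)
      have hsub : s ≤ A * n := by
        rw [hs', ← hcast, Finset.mul_sum]
        exact Finset.sum_le_sum fun j _ =>
          mul_le_mul_of_nonneg_right (hAj j) (Nat.cast_nonneg _)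
      have hΓs : 0 < Real.Gamma (β + s) := Real.Gamma_pos_of_pos (by linarith)
      have hrec : Real.Gamma (β + s + 2) = (β + s + 1) * ((β + s) * Real.Gamma (β + s)) := by
        have h1 : Real.Gamma (β + s + 1) = (β + s) * Real.Gamma (β + s) :=
          Real.Gamma_add_one (by positivity : (0:ℝ) < β + s).ne'
        have h2 : Real.Gamma (β + s + 1 + 1) = (β + s + 1) * Real.Gamma (β + s + 1) :=
          Real.Gamma_add_one (by positivity : (0:ℝ) < β + s + 1).ne'
        rw [show β + s + 2 = β + s + 1 + 1 by ring, h2, h1]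
      have hkey : 1 / Real.Gamma (β + s) ≤
          ((β + A * n) * (β + A * n + 1)) / Real.Gamma (β + a * n + 2) := by
        rw [div_le_div_iff₀ hΓs hΓan, one_mul]
        calc Real.Gamma (β + a * n + 2) ≤ Real.Gamma (β + s + 2) := by
              have h2le : (2:ℝ) ≤ β + a * n + 2 := by
                have := mul_nonneg ha.le (Nat.cast_nonneg (α := ℝ) n); linarith
              exact gamma_mono h2le (by linarith)
          _ = (β + s + 1) * ((β + s) * Real.Gamma (β + s)) := hrec
          _ ≤ (β + A * n + 1) * ((β + A * n) * Real.Gamma (β + s)) := by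
              apply mul_le_mul (by linarith) (mul_le_mul_of_nonneg_right (by linarith) hΓs.le)
                (by positivity) (by positivity)
          _ = (β + A * n) * (β + A * n + 1) * Real.Gamma (β + s) := by ring
      have hCnn : (0:ℝ) ≤ (Nat.multinomial Finset.univ k : ℝ) * (∏ j, ‖z j‖ ^ k j) := by
        positivity
      rw [hNeq k, div_eq_mul_one_div]
      exact mul_le_mul_of_nonneg_left hkey hCnn
    calc ∑ k ∈ Finset.piAntidiag Finset.univ n, N k
        ≤ ∑ k ∈ Finset.piAntidiag Finset.univ n,
          ((Nat.multinomial Finset.univ k : ℝ) * (∏ j, ‖z j‖ ^ k j)) *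
            (((β + A * n) * (β + A * n + 1)) / Real.Gamma (β + a * n + 2)) :=
          Finset.sum_le_sum step
      _ = (∑ k ∈ Finset.piAntidiag Finset.univ n,
          (Nat.multinomial Finset.univ k : ℝ) * (∏ j, ‖z j‖ ^ k j)) *
            (((β + A * n) * (β + A * n + 1)) / Real.Gamma (β + a * n + 2)) := by
          rw [← Finset.sum_mul]
      _ = R ^ n * (((β + A * n) * (β + A * n + 1)) / Real.Gamma (β + a * n + 2)) := by
          rw [hR', Finset.sum_pow_eq_sum_piAntidiag]
      _ = W n := by rw [hW]; ring
  -- conclude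
  apply summable_of_sum_le hNnn
  intro u
  set N0 : ℕ := (u.sup fun k => ∑ j, k j) + 1 with hN0
  have hsub : u ⊆ (Finset.range N0).biUnion (fun n => Finset.piAntidiag Finset.univ n) := by
    intro k hk
    rw [Finset.mem_biUnion]
    refine ⟨∑ j, k j, ?_, ?_⟩
    · rw [Finset.mem_range, hN0]
      exact Nat.lt_succ_of_le (Finset.le_sup hk)
    · rw [Finset.mem_piAntidiag]
      exact ⟨rfl, fun i _ => mem_univ i⟩
  have hdisj : ∀ n₁ ∈ Finset.range N0, ∀ n₂ ∈ Finset.range N0, n₁ ≠ n₂ →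
      Disjoint (Finset.piAntidiag (Finset.univ : Finset (Fin m)) n₁)
        (Finset.piAntidiag Finset.univ n₂) := by
    intro n₁ _ n₂ _ hne
    rw [Finset.disjoint_left]
    intro k hk1 hk2
    rw [Finset.mem_piAntidiag] at hk1 hk2
    exact hne (hk1.1 ▸ hk2.1 ▸ rfl)
  calc ∑ k ∈ u, N k ≤ ∑ k ∈ (Finset.range N0).biUnion (fun n => Finset.piAntidiag Finset.univ n),
        N k := Finset.sum_le_sum_of_subset_of_nonneg hsub fun k _ _ => hNnn k
    _ = ∑ n ∈ Finset.range N0, ∑ k ∈ Finset.piAntidiag Finset.univ n, N k :=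
        Finset.sum_biUnion hdisj
    _ ≤ ∑ n ∈ Finset.range N0, W n := Finset.sum_le_sum fun n _ => hbound n
    _ ≤ ∑' n, W n := Summable.sum_le_tsum _ (fun n _ => hWnn n) hWs


lemma pascal {m : ℕ} (k : Fin m → ℕ) (hk : k ≠ 0) :
    ∑ j ∈ Finset.univ.filter (fun j => k j ≠ 0),
      Nat.multinomial Finset.univ (k - Pi.single j 1) = Nat.multinomial Finset.univ k := by
  set n : ℕ := ∑ j, k j with hn'
  have hn : 0 < n := by
    rcases Nat.eq_zero_or_pos n with h | h
    · exfalso; apply hk; funext j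
      exact Finset.sum_eq_zero_iff.mp (hn' ▸ h.symm).symm j (mem_univ j)
    · exact h
  have hprodpos : 0 < ∏ i, (k i)! := Finset.prod_pos fun i _ => (k i).factorial_pos
  apply Nat.eq_of_mul_eq_mul_left hprodpos
  rw [Nat.multinomial_spec, Finset.mul_sum]
  have hterm : ∀ j ∈ Finset.univ.filter (fun j => k j ≠ 0),
      (∏ i, (k i)!) * Nat.multinomial Finset.univ (k - Pi.single j 1) = k j * (n - 1)! := by
    intro j hj
    rw [Finset.mem_filter] at hj
    have hkj : 0 < k j := Nat.pos_of_ne_zero hj.2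
    have happ : ∀ i : Fin m, (k - Pi.single j 1 : Fin m → ℕ) i = k i - if i = j then 1 else 0 := by
      intro i
      rw [Pi.sub_apply]
      congr 1
      by_cases h : i = j
      · subst h; rw [Pi.single_eq_same, if_pos rfl]
      · rw [Pi.single_eq_of_ne h, if_neg h]
    have h1 : ∑ i ∈ Finset.univ.erase j, (k - Pi.single j 1 : Fin m → ℕ) i =
        ∑ i ∈ Finset.univ.erase j, k i :=
      Finset.sum_congr rfl fun i hi => by
        rw [happ i, if_neg (Finset.mem_erase.mp hi).1, Nat.sub_zero]
    have e1 : ∑ i : Fin m, (k - Pi.single j 1 : Fin m → ℕ) i =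
        ∑ i ∈ Finset.univ.erase j, k i + (k j - 1) := by
      rw [← Finset.sum_erase_add _ _ (mem_univ j), h1, happ j, if_pos rfl]
    have e2 : n = ∑ i ∈ Finset.univ.erase j, k i + k j := by
      rw [hn', ← Finset.sum_erase_add _ _ (mem_univ j)]
    have hsum : ∑ i : Fin m, (k - Pi.single j 1 : Fin m → ℕ) i = n - 1 := by omega
    have h2 : ∏ i ∈ Finset.univ.erase j, ((k - Pi.single j 1 : Fin m → ℕ) i)! =
        ∏ i ∈ Finset.univ.erase j, (k i)! :=
      Finset.prod_congr rfl fun i hi => by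
        rw [happ i, if_neg (Finset.mem_erase.mp hi).1, Nat.sub_zero]
    have hfac : (k j)! = k j * (k j - 1)! := (Nat.mul_factorial_pred hkj.ne').symm
    have hprod : ∏ i, (k i)! = k j * ∏ i : Fin m, ((k - Pi.single j 1 : Fin m → ℕ) i)! := by
      conv_rhs => rw [← Finset.prod_erase_mul _ _ (mem_univ j)]
      conv_lhs => rw [← Finset.prod_erase_mul _ _ (mem_univ j)]
      rw [h2, happ j, if_pos rfl, hfac]
      ring
    rw [hprod, mul_assoc, Nat.multinomial_spec, hsum]
  rw [Finset.sum_congr rfl hterm, ← Finset.sum_mul, Finset.sum_filter_ne_zero, ← hn']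
  exact Nat.mul_factorial_pred hn.ne'

/-- The multinomial Mittag-Leffler function
`E_{(α₁,…,α_m),β}(z₁,…,z_m) = ∑_{k≥0} ∑_{k₁+⋯+k_m=k} (k choose k₁,…,k_m) ∏ z_j^{k_j} / Γ(β + ∑ α_j k_j)`,
written as an absolutely convergent sum over all multi-indices. -/
noncomputable def mml {m : ℕ} (α : Fin m → ℝ) (β : ℝ) (z : Fin m → ℂ) : ℂ :=
  ∑' k : Fin m → ℕ,
    (Nat.multinomial Finset.univ k : ℂ) * (∏ j, z j ^ k j) /
      (Real.Gamma (β + ∑ j, α j * (k j : ℝ)) : ℂ)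


theorem mml_sum_identity (m : ℕ) (α : Fin m → ℝ) (hα : ∀ j, 0 < α j) (β : ℝ) (hβ : 0 < β)
    (z : Fin m → ℂ) :
    (∑ j, z j * mml α (β + α j) z) + (1 / Real.Gamma β : ℝ) = mml α β z := by
  classical
  set F : ℝ → (Fin m → ℕ) → ℂ := fun b k =>
    (Nat.multinomial Finset.univ k : ℂ) * (∏ j, z j ^ k j) /
      (Real.Gamma (b + ∑ j, α j * (k j : ℝ)) : ℂ) with hF
  have hsumF : ∀ b : ℝ, 0 < b → Summable (F b) := fun b hb => summable_F m α hα b hb z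
  set H : Fin m → (Fin m → ℕ) → ℂ := fun j k =>
    if k j = 0 then 0 else
      (Nat.multinomial Finset.univ (k - Pi.single j 1) : ℂ) * (∏ i, z i ^ k i) /
        (Real.Gamma (β + ∑ i, α i * (k i : ℝ)) : ℂ) with hH
  have hinj : ∀ j : Fin m, Function.Injective (fun k : Fin m → ℕ => k + Pi.single j 1) :=
    fun j => add_left_injective _
  have hsupp : ∀ j : Fin m, ∀ k : Fin m → ℕ,
      k ∉ Set.range (fun k : Fin m → ℕ => k + Pi.single j 1) → H j k = 0 := by
    intro j k hkr
    rw [hH]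
    simp only []
    rw [if_pos]
    by_contra hkj
    apply hkr
    refine ⟨k - Pi.single j 1, ?_⟩
    funext i
    simp only [Pi.add_apply, Pi.sub_apply]
    by_cases h : i = j
    · subst h; rw [Pi.single_eq_same]; omega
    · rw [Pi.single_eq_of_ne h]; omega
  have hcomp : ∀ j : Fin m, ∀ k : Fin m → ℕ,
      H j (k + Pi.single j 1) = z j * F (β + α j) k := by
    intro j k
    have happj : (k + Pi.single j 1 : Fin m → ℕ) j = k j + 1 := by
      rw [Pi.add_apply, Pi.single_eq_same]
    have hsub : (k + Pi.single j 1 : Fin m → ℕ) - Pi.single j 1 = k := by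
      funext i
      simp only [Pi.sub_apply, Pi.add_apply]
      omega
    have hprod : ∏ i, z i ^ (k + Pi.single j 1 : Fin m → ℕ) i = (∏ i, z i ^ k i) * z j := by
      rw [← Finset.prod_erase_mul _ _ (mem_univ j), ← Finset.prod_erase_mul _
        (fun i => z i ^ k i) (mem_univ j)]
      have h1 : ∏ i ∈ Finset.univ.erase j, z i ^ (k + Pi.single j 1 : Fin m → ℕ) i =
          ∏ i ∈ Finset.univ.erase j, z i ^ k i :=
        Finset.prod_congr rfl fun i hi => by
          rw [Pi.add_apply, Pi.single_eq_of_ne (Finset.mem_erase.mp hi).1, add_zero]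
      rw [h1, happj, pow_succ]
      ring
    have hsum : β + ∑ i, α i * ((k + Pi.single j 1 : Fin m → ℕ) i : ℝ) =
        (β + α j) + ∑ i, α i * (k i : ℝ) := by
      have h1 : ∀ i : Fin m, α i * ((k + Pi.single j 1 : Fin m → ℕ) i : ℝ) =
          α i * (k i : ℝ) + α i * ((Pi.single j 1 : Fin m → ℕ) i : ℝ) := by
        intro i; rw [Pi.add_apply]; push_cast; ring
      rw [Finset.sum_congr rfl fun i _ => h1 i, Finset.sum_add_distrib]
      have h2 : ∑ i, α i * ((Pi.single j 1 : Fin m → ℕ) i : ℝ) = α j := by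
        rw [Finset.sum_eq_single j]
        · rw [Pi.single_eq_same]; norm_num
        · intro i _ hij
          rw [Pi.single_eq_of_ne hij]; norm_num
        · intro h; exact absurd (mem_univ j) h
      rw [h2]; ring
    rw [hH, hF]
    simp only []
    rw [if_neg (by rw [happj]; omega), hsub, hprod, hsum]
    rw [mul_comm (∏ i, z i ^ k i) (z j), ← mul_assoc, mul_comm _ (z j), mul_assoc, mul_div_assoc]
  have hsummH : ∀ j : Fin m, Summable (H j) := by
    intro j
    rw [← Function.Injective.summable_iff (hinj j) (hsupp j)]
    have : (H j ∘ fun k : Fin m → ℕ => k + Pi.single j 1) = fun k => z j * F (β + α j) k := by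
      funext k; exact hcomp j k
    rw [this]
    exact (hsumF _ (by have := hα j; linarith)).mul_left _
  have step2 : ∀ j : Fin m, z j * mml α (β + α j) z = ∑' k, H j k := by
    intro j
    rw [mml, ← tsum_mul_left]
    rw [← Function.Injective.tsum_eq (hinj j) (f := H j) (by
      intro k hk
      by_contra hkr
      exact hk (hsupp j k hkr))]
    exact tsum_congr fun k => (hcomp j k).symm
  have step3 : ∑ j, z j * mml α (β + α j) z = ∑' k, ∑ j, H j k := by
    rw [Finset.sum_congr rfl fun j _ => step2 j]
    exact (Summable.tsum_finsetSum fun j _ => hsummH j).symm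
  have step4 : ∀ k : Fin m → ℕ, ∑ j, H j k = if k = 0 then 0 else F β k := by
    intro k
    by_cases hk : k = 0
    · subst hk
      rw [if_pos rfl]
      apply Finset.sum_eq_zero
      intro j _
      rw [hH]
      have h0 : (0 : Fin m → ℕ) j = 0 := rfl
      simp only []
      rw [if_pos h0]
    · rw [if_neg hk]
      have : ∀ j : Fin m, H j k = (if k j = 0 then 0 else
          (Nat.multinomial Finset.univ (k - Pi.single j 1) : ℂ)) *
            ((∏ i, z i ^ k i) / (Real.Gamma (β + ∑ i, α i * (k i : ℝ)) : ℂ)) := by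
        intro j
        rw [hH]
        simp only []
        split_ifs with h
        · rw [zero_mul]
        · rw [mul_div_assoc]
      rw [Finset.sum_congr rfl fun j _ => this j, ← Finset.sum_mul]
      have hps : ∑ j, (if k j = 0 then 0 else
          (Nat.multinomial Finset.univ (k - Pi.single j 1) : ℂ)) =
          (Nat.multinomial Finset.univ k : ℂ) := by
        rw [← pascal k hk]
        push_cast
        rw [Finset.sum_filter]
        apply Finset.sum_congr rfl
        intro j _
        by_cases h : k j = 0
        · rw [if_pos h, if_neg (by simp [h])]
        · rw [if_neg h, if_pos h]
      rw [hps]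
      exact (mul_div_assoc _ _ _).symm
  have step5 : mml α β z = F β 0 + ∑' k, if k = 0 then 0 else F β k := by
    rw [mml]
    exact Summable.tsum_eq_add_tsum_ite (hsumF β hβ) 0
  have hF0 : F β 0 = ((1 / Real.Gamma β : ℝ) : ℂ) := by
    rw [hF]
    simp only [Pi.zero_apply, pow_zero, Nat.cast_zero, mul_zero, Finset.sum_const_zero,
      add_zero, Finset.prod_const_one, mul_one]
    rw [show Nat.multinomial Finset.univ (0 : Fin m → ℕ) = 1 by
      simp [Nat.multinomial]]
    push_cast
    ring
  rw [step3, tsum_congr step4, step5, hF0]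
  ring
end

section
/- Differentiation formula for the multinomial Mittag-Leffler function: let $\alpha_1,\dots,\alpha_m > 0$, $q_1,\dots,q_m,\beta \in \mathbb{R}$ and $\gamma \in \mathbb{R}$. Then for $t > 0$: $\frac{d}{dt}\Big[t^\gamma E_{(\alpha_1,\dots,\alpha_m),\beta+1}(q_1 t^{\alpha_1},\dots,q_m t^{\alpha_m})\Big] = t^{\gamma-1} E_{(\alpha_1,\dots,\alpha_m),\beta}(q_1 t^{\alpha_1},\dots,q_m t^{\alpha_m}) + (\gamma-\beta)\, t^{\gamma-1} E_{(\alpha_1,\dots,\alpha_m),\beta+1}(q_1 t^{\alpha_1},\dots,q_m t^{\alpha_m})$. -/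
open Filter Finset

/-- The (real-valued) multinomial Mittag-Leffler function as a sum over multi-indices. -/
noncomputable def mmlR {m : ℕ} (α : Fin m → ℝ) (β : ℝ) (z : Fin m → ℝ) : ℝ :=
  ∑' k : Fin m → ℕ,
    (Nat.multinomial Finset.univ k : ℝ) * (∏ j, z j ^ k j) /
      Real.Gamma (β + ∑ j, α j * (k j : ℝ))

lemma aux_choose_le_two_pow (n k : ℕ) : n.choose k ≤ 2 ^ n := by
  rcases le_or_gt k n with h | h
  · calc n.choose k ≤ ∑ i ∈ Finset.range (n+1), n.choose i :=
        Finset.single_le_sum (fun i _ => Nat.zero_le _) (by simp [Nat.lt_succ_iff, h])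
    _ = 2 ^ n := Nat.sum_range_choose n
  · simp [Nat.choose_eq_zero_of_lt h]

lemma aux_multinomial_le {ι : Type*} [DecidableEq ι] (s : Finset ι) (k : ι → ℕ) :
    Nat.multinomial s k ≤ (2 ^ s.card) ^ (∑ j ∈ s, k j) := by
  induction s using Finset.induction with
  | empty => simp
  | @insert a s ha ih =>
    rw [Nat.multinomial_insert ha, Finset.sum_insert ha, Finset.card_insert_of_notMem ha]
    calc (k a + ∑ j ∈ s, k j).choose (k a) * Nat.multinomial s k
        ≤ 2 ^ (k a + ∑ j ∈ s, k j) * (2 ^ s.card) ^ (∑ j ∈ s, k j) :=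
          Nat.mul_le_mul (aux_choose_le_two_pow _ _) ih
      _ ≤ 2 ^ (k a + ∑ j ∈ s, k j) * (2 ^ s.card) ^ (k a + ∑ j ∈ s, k j) := by
          gcongr
          · exact Nat.one_le_two_pow
          · exact Nat.le_add_left _ _
      _ = (2 ^ (s.card + 1)) ^ (k a + ∑ j ∈ s, k j) := by
          rw [pow_succ, mul_pow]; ring

set_option maxHeartbeats 1000000 in
lemma aux_pi_geom_summable (m : ℕ) :
    Summable (fun k : Fin m → ℕ => ∏ j, (2⁻¹ : ℝ) ^ (k j)) := by
  induction m with
  | zero => exact Summable.of_finite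
  | succ n ih =>
    have hgeom : Summable (fun i : ℕ => (2⁻¹ : ℝ) ^ i) :=
      summable_geometric_of_lt_one (by norm_num) (by norm_num)
    have hF : Summable (fun p : ℕ × (Fin n → ℕ) =>
        (2⁻¹ : ℝ) ^ p.1 * ∏ j, (2⁻¹ : ℝ) ^ (p.2 j)) :=
      Summable.mul_of_nonneg (f := fun i : ℕ => (2⁻¹ : ℝ) ^ i)
        (g := fun k : Fin n → ℕ => ∏ j, (2⁻¹ : ℝ) ^ (k j)) hgeom ih (fun i => by positivity)
        (fun p => Finset.prod_nonneg fun j _ => by positivity)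
    have := ((Fin.consEquiv fun _ : Fin (n+1) => ℕ).summable_iff
      (f := fun k : Fin (n+1) → ℕ => ∏ j, (2⁻¹ : ℝ) ^ (k j))).mp ?_
    · exact this
    · convert hF using 1
      funext p
      simp [Fin.prod_univ_succ, mul_comm]

lemma aux_gamma_ge {W : ℝ} (hW : 1 ≤ W) : ∀ᶠ x in atTop, W ^ x ≤ Real.Gamma x := by
  have hW0 : (0:ℝ) < W := lt_of_lt_of_le one_pos hW
  have h0 := FloorSemiring.tendsto_pow_div_factorial_atTop (K := ℝ) W
  have h1 : ∀ᶠ n : ℕ in atTop, W ^ n / n.factorial < W ^ (-2 : ℝ) :=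
    h0.eventually_lt_const (Real.rpow_pos_of_pos hW0 _)
  obtain ⟨N, hN⟩ := h1.exists_forall_of_atTop
  filter_upwards [eventually_ge_atTop ((N : ℝ) + 3), eventually_ge_atTop (2 : ℝ)] with x hx h2
  have hfl2 : (2 : ℕ) ≤ ⌊x⌋₊ := Nat.le_floor (by exact_mod_cast h2)
  have hflN : N + 3 ≤ ⌊x⌋₊ := Nat.le_floor (by push_cast; linarith)
  set q := ⌊x⌋₊ - 1 with hq
  have hq1 : ⌊x⌋₊ = q + 1 := by omega
  have hqN : N ≤ q := by omega
  have hkey : W ^ (q + 2 : ℕ) ≤ q.factorial := by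
    have hlt := hN q hqN
    rw [div_lt_iff₀ (by positivity)] at hlt
    have h5 : W ^ (2:ℕ) * W ^ (-2:ℝ) = 1 := by
      rw [← Real.rpow_natCast W 2, ← Real.rpow_add hW0]; norm_num
    have h6 : W ^ q * W ^ (2:ℕ) ≤ (W ^ (-2:ℝ) * (q.factorial:ℝ)) * W ^ (2:ℕ) :=
      mul_le_mul_of_nonneg_right hlt.le (by positivity)
    have h7 : (W ^ (-2:ℝ) * (q.factorial:ℝ)) * W ^ (2:ℕ) = (q.factorial:ℝ) := by
      calc (W ^ (-2:ℝ) * (q.factorial:ℝ)) * W ^ (2:ℕ)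
          = (W ^ (2:ℕ) * W ^ (-2:ℝ)) * (q.factorial:ℝ) := by ring
        _ = (q.factorial:ℝ) := by rw [h5]; ring
    calc W ^ (q+2:ℕ) = W ^ q * W ^ (2:ℕ) := pow_add W q 2
      _ ≤ (W ^ (-2:ℝ) * (q.factorial:ℝ)) * W ^ (2:ℕ) := h6
      _ = q.factorial := h7
  have hmono : Real.Gamma (⌊x⌋₊ : ℝ) ≤ Real.Gamma x := by
    rcases eq_or_lt_of_le (Nat.floor_le (by linarith : (0:ℝ) ≤ x)) with h | h
    · rw [h]
    · exact (Real.Gamma_strictMonoOn_Ici (by simp only [Set.mem_Ici]; exact_mod_cast hfl2) (by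
        simp only [Set.mem_Ici]; linarith) h).le
  have hgam : (q.factorial : ℝ) ≤ Real.Gamma x := by
    rw [← Real.Gamma_nat_eq_factorial q]
    have : ((q:ℝ) + 1) = (⌊x⌋₊ : ℝ) := by rw [hq1]; push_cast; ring
    rw [this]; exact hmono
  have hxle : x ≤ (q + 2 : ℕ) := by
    have := Nat.lt_floor_add_one x
    rw [hq1] at this; push_cast at this ⊢; linarith
  calc W ^ x ≤ W ^ ((q + 2 : ℕ) : ℝ) := Real.rpow_le_rpow_of_exponent_le hW hxle
    _ = W ^ (q + 2 : ℕ) := Real.rpow_natCast W _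
    _ ≤ Real.Gamma x := le_trans (by exact_mod_cast hkey) hgam

lemma aux_gamma_div (x : ℝ) : x / Real.Gamma (x + 1) = 1 / Real.Gamma x := by
  rcases eq_or_ne x 0 with h | h
  · simp [h, Real.Gamma_zero]
  · rw [Real.Gamma_add_one h]
    rcases eq_or_ne (Real.Gamma x) 0 with hg | hg
    · simp [hg]
    · field_simp

lemma aux_summable_master {m : ℕ} (α : Fin m → ℝ) (hα : ∀ j, 0 < α j) (y : Fin m → ℝ)
    (hy : ∀ j, 0 ≤ y j) (β' P : ℝ) (hP : 0 ≤ P) :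
    Summable (fun k : Fin m → ℕ =>
      (Nat.multinomial Finset.univ k : ℝ) * (∏ j, y j ^ k j) * (P + ∑ j, α j * (k j : ℝ)) /
        |Real.Gamma (β' + ∑ j, α j * (k j : ℝ))|) := by
  have hsum_nonneg : ∀ k : Fin m → ℕ, (0:ℝ) ≤ ∑ j, α j * (k j : ℝ) :=
    fun k => Finset.sum_nonneg fun j _ => mul_nonneg (hα j).le (Nat.cast_nonneg _)
  -- choose W
  have hWex : ∃ W : ℝ, 1 ≤ W ∧ ∀ j, (2:ℝ)^m * y j * W ^ (-α j) ≤ 4⁻¹ := by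
    have hj : ∀ j : Fin m, ∀ᶠ W : ℝ in atTop, (2:ℝ)^m * y j * W ^ (-α j) ≤ 4⁻¹ := by
      intro j
      have h0 : Tendsto (fun W : ℝ => (2:ℝ)^m * y j * W ^ (-α j)) atTop (nhds 0) := by
        simpa using (tendsto_rpow_neg_atTop (hα j)).const_mul ((2:ℝ)^m * y j)
      exact h0.eventually_le_const (by norm_num)
    obtain ⟨W, hW⟩ := ((eventually_all.mpr hj).and (eventually_ge_atTop (1:ℝ))).exists
    exact ⟨W, hW.2, hW.1⟩
  obtain ⟨W, hW1, hWsmall⟩ := hWex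
  have hW0 : (0:ℝ) < W := lt_of_lt_of_le one_pos hW1
  obtain ⟨T, hT⟩ := (aux_gamma_ge hW1).exists_forall_of_atTop
  -- finite exceptional set
  set E : Set (Fin m → ℕ) := {k | β' + ∑ j, α j * (k j:ℝ) < T} with hEdef
  have hEfin : E.Finite := by
    apply Set.Finite.subset (Set.Finite.pi (fun j : Fin m => Set.finite_Iic (⌈(T - β') / α j⌉₊)))
    intro k hk
    simp only [Set.mem_pi, Set.mem_univ, Set.mem_Iic, forall_true_left]
    intro j
    have h1 : α j * (k j:ℝ) ≤ ∑ i, α i * (k i:ℝ) :=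
      Finset.single_le_sum (fun i _ => mul_nonneg (hα i).le (Nat.cast_nonneg _))
        (Finset.mem_univ j)
    have h2 : α j * (k j : ℝ) < T - β' := by
      have hk' : β' + ∑ j, α j * (k j:ℝ) < T := hk
      linarith
    have h3 : (k j : ℝ) ≤ (T - β') / α j := by
      rw [le_div_iff₀ (hα j)]; nlinarith [h2]
    have h4 : (k j : ℝ) ≤ (⌈(T - β') / α j⌉₊ : ℝ) := h3.trans (Nat.le_ceil _)
    exact_mod_cast h4
  rw [← hEfin.summable_compl_iff]
  refine Summable.of_nonneg_of_le (f := (fun k : Fin m → ℕ =>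
      (W ^ (-β') * (P + ∑ j, α j)) * ∏ j, (2⁻¹:ℝ) ^ (k j)) ∘ (Subtype.val)) ?_ ?_
    (((aux_pi_geom_summable m).mul_left _).subtype _)
  · intro k
    apply div_nonneg _ (abs_nonneg _)
    apply mul_nonneg (mul_nonneg (Nat.cast_nonneg _)
      (Finset.prod_nonneg fun j _ => pow_nonneg (hy j) _))
    exact add_nonneg hP (hsum_nonneg k.1)
  · rintro ⟨k, hk⟩
    simp only [Function.comp_apply, Set.mem_compl_iff, hEdef, Set.mem_setOf_eq, not_lt] at hk ⊢
    set S := ∑ j, α j * (k j : ℝ) with hSdef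
    set n := ∑ j, k j with hndef
    have hS0 : 0 ≤ S := hsum_nonneg k
    have hΓge : W ^ (β' + S) ≤ Real.Gamma (β' + S) := hT _ hk
    have hΓpos : 0 < Real.Gamma (β' + S) :=
      lt_of_lt_of_le (Real.rpow_pos_of_pos hW0 _) hΓge
    have hX0 : 0 ≤ (Nat.multinomial Finset.univ k : ℝ) * (∏ j, y j ^ k j) * (P + S) := by
      apply mul_nonneg (mul_nonneg (Nat.cast_nonneg _)
        (Finset.prod_nonneg fun j _ => pow_nonneg (hy j) _))
      exact add_nonneg hP hS0
    have hmult : (Nat.multinomial Finset.univ k : ℝ) ≤ ((2:ℝ)^m)^n := by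
      have := aux_multinomial_le (Finset.univ : Finset (Fin m)) k
      rw [Finset.card_univ, Fintype.card_fin] at this
      exact_mod_cast this
    have hWS : (W ^ (β' + S))⁻¹ = W ^ (-β') * ∏ j, (W ^ (-α j)) ^ (k j) := by
      rw [← Real.rpow_neg hW0.le, neg_add, Real.rpow_add hW0]
      congr 1
      have h5 : -S = ∑ j, (-α j) * (k j:ℝ) := by
        rw [hSdef, ← Finset.sum_neg_distrib]
        exact Finset.sum_congr rfl fun j _ => by ring
      rw [h5, Real.rpow_sum_of_pos hW0]
      refine Finset.prod_congr rfl fun j _ => ?_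
      rw [← Real.rpow_natCast (W ^ (-α j)) (k j), ← Real.rpow_mul hW0.le]
    have hnk : ∀ j, k j ≤ n := fun j =>
      Finset.single_le_sum (fun i _ => Nat.zero_le _) (Finset.mem_univ j)
    have hSn : S ≤ (∑ j, α j) * n := by
      rw [hSdef, Finset.sum_mul]
      apply Finset.sum_le_sum
      intro j _
      have h' : (k j:ℝ) ≤ (n:ℝ) := by exact_mod_cast hnk j
      exact mul_le_mul_of_nonneg_left h' (hα j).le
    have hhalf : ((2:ℝ)⁻¹)^n ≤ 1 := by
      apply pow_le_one₀ (by norm_num) (by norm_num)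
    have hn2 : (n:ℝ) * ((2:ℝ)⁻¹)^n ≤ 1 := by
      have h2n : (n:ℝ) ≤ 2^n := by exact_mod_cast (Nat.lt_two_pow_self (n := n)).le
      have e : (n:ℝ) * ((2:ℝ)⁻¹)^n = (n:ℝ) / 2^n := by
        rw [div_eq_mul_inv, ← inv_pow]
      rw [e, div_le_one (by positivity)]
      exact h2n
    have hα0 : 0 ≤ ∑ j, α j := Finset.sum_nonneg fun j _ => (hα j).le
    calc (Nat.multinomial Finset.univ k : ℝ) * (∏ j, y j ^ k j) * (P + S) /
          |Real.Gamma (β' + S)|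
        = (Nat.multinomial Finset.univ k : ℝ) * (∏ j, y j ^ k j) * (P + S) /
          Real.Gamma (β' + S) := by rw [abs_of_pos hΓpos]
      _ ≤ (Nat.multinomial Finset.univ k : ℝ) * (∏ j, y j ^ k j) * (P + S) /
          W ^ (β' + S) := by
          gcongr
          all_goals first
            | exact hX0
            | exact Real.rpow_pos_of_pos hW0 _
            | exact hΓge
      _ = (Nat.multinomial Finset.univ k : ℝ) * (∏ j, y j ^ k j) * (P + S) *
          (W ^ (-β') * ∏ j, (W ^ (-α j)) ^ (k j)) := by
          rw [div_eq_mul_inv, hWS]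
      _ ≤ ((2:ℝ)^m)^n * (∏ j, y j ^ k j) * (P + S) *
          (W ^ (-β') * ∏ j, (W ^ (-α j)) ^ (k j)) := by
          have hp1 : (0:ℝ) ≤ ∏ j, y j ^ k j :=
            Finset.prod_nonneg fun j _ => pow_nonneg (hy j) _
          have hp2 : (0:ℝ) ≤ W ^ (-β') * ∏ j, (W ^ (-α j)) ^ (k j) := by
            apply mul_nonneg (Real.rpow_pos_of_pos hW0 _).le
            exact Finset.prod_nonneg fun j _ => pow_nonneg (Real.rpow_pos_of_pos hW0 _).le _
          exact mul_le_mul_of_nonneg_right (mul_le_mul_of_nonneg_right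
            (mul_le_mul_of_nonneg_right hmult hp1) (add_nonneg hP hS0)) hp2
      _ = W ^ (-β') * (P + S) * ∏ j, ((2:ℝ)^m * y j * W ^ (-α j)) ^ (k j) := by
          simp only [mul_pow, Finset.prod_mul_distrib, Finset.prod_pow_eq_pow_sum, ← hndef]
          ring
      _ ≤ W ^ (-β') * (P + S) * ∏ j, ((4:ℝ)⁻¹) ^ (k j) := by
          apply mul_le_mul_of_nonneg_left _ (by positivity)
          apply Finset.prod_le_prod
          · intro j _
            apply pow_nonneg
            apply mul_nonneg (mul_nonneg (by positivity) (hy j)) (Real.rpow_pos_of_pos hW0 _).le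
          · intro j _
            exact pow_le_pow_left₀ (mul_nonneg (mul_nonneg (by positivity) (hy j))
              (Real.rpow_pos_of_pos hW0 _).le) (hWsmall j) _
      _ = W ^ (-β') * ((P + S) * ((2:ℝ)⁻¹)^n) * ((2:ℝ)⁻¹)^n := by
          rw [Finset.prod_pow_eq_pow_sum]
          have : ((4:ℝ)⁻¹) ^ n = ((2:ℝ)⁻¹)^n * ((2:ℝ)⁻¹)^n := by
            rw [← mul_pow]; norm_num
          rw [← hndef, this]; ring
      _ ≤ W ^ (-β') * (P + ∑ j, α j) * ((2:ℝ)⁻¹)^n := by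
          have e2 : P * ((2:ℝ)⁻¹)^n ≤ P := by nlinarith [hhalf, hP]
          have e3 : S * ((2:ℝ)⁻¹)^n ≤ ∑ j, α j := by
            calc S * ((2:ℝ)⁻¹)^n ≤ ((∑ j, α j) * n) * ((2:ℝ)⁻¹)^n := by
                  nlinarith [hSn, pow_nonneg (by norm_num : (0:ℝ) ≤ 2⁻¹) n]
              _ = (∑ j, α j) * ((n:ℝ) * ((2:ℝ)⁻¹)^n) := by ring
              _ ≤ ∑ j, α j := by nlinarith [hn2, hα0]
          have hcore : (P + S) * ((2:ℝ)⁻¹)^n ≤ P + ∑ j, α j := by nlinarith [e2, e3]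
          gcongr
          all_goals first
            | exact (Real.rpow_pos_of_pos hW0 _).le
            | exact hcore
      _ = (W ^ (-β') * (P + ∑ j, α j)) * ∏ j, (2⁻¹:ℝ) ^ (k j) := by
          rw [Finset.prod_pow_eq_pow_sum, ← hndef]; try ring

lemma aux_prod_expand {m : ℕ} (α q : Fin m → ℝ) {s : ℝ} (hs : 0 < s) (k : Fin m → ℕ) :
    ∏ j, (q j * s ^ α j) ^ (k j) = (∏ j, q j ^ k j) * s ^ (∑ j, α j * (k j:ℝ)) := by
  rw [Real.rpow_sum_of_pos hs, ← Finset.prod_mul_distrib]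
  refine Finset.prod_congr rfl fun j _ => ?_
  rw [mul_pow]
  congr 1
  rw [← Real.rpow_natCast (s ^ α j) (k j), ← Real.rpow_mul hs.le]

lemma aux_abs_term {m : ℕ} (q : Fin m → ℝ) {s : ℝ} (hs : 0 < s) (α : Fin m → ℝ)
    (k : Fin m → ℕ) (G : ℝ) (X : ℝ) (hX : 0 ≤ X) :
    |X * (∏ j, (q j * s ^ α j) ^ k j) / G| =
      X * (∏ j, (|q j| * s ^ α j) ^ k j) / |G| := by
  rw [abs_div, abs_mul, abs_of_nonneg hX, Finset.abs_prod]
  congr 2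
  refine Finset.prod_congr rfl fun j _ => ?_
  rw [abs_pow, abs_mul, abs_of_nonneg (Real.rpow_pos_of_pos hs _).le]

lemma aux_summable_terms {m : ℕ} (α : Fin m → ℝ) (hα : ∀ j, 0 < α j) (q : Fin m → ℝ)
    (β' : ℝ) {t : ℝ} (ht : 0 < t) :
    Summable (fun k : Fin m → ℕ =>
      (Nat.multinomial Finset.univ k : ℝ) * (∏ j, (q j * t ^ α j) ^ k j) /
        Real.Gamma (β' + ∑ j, α j * (k j : ℝ))) := by
  apply Summable.of_norm
  apply Summable.of_nonneg_of_le (f := fun k : Fin m → ℕ =>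
      (Nat.multinomial Finset.univ k : ℝ) * (∏ j, (|q j| * t ^ α j) ^ k j) *
        (1 + ∑ j, α j * (k j : ℝ)) / |Real.Gamma (β' + ∑ j, α j * (k j : ℝ))|)
    (fun k => norm_nonneg _) ?_
    (aux_summable_master α hα _
      (fun j => mul_nonneg (abs_nonneg _) (Real.rpow_pos_of_pos ht _).le) β' 1 one_pos.le)
  intro k
  beta_reduce
  rw [Real.norm_eq_abs, aux_abs_term q ht α k _ _ (Nat.cast_nonneg _)]
  rw [div_eq_mul_inv, div_eq_mul_inv]
  apply mul_le_mul_of_nonneg_right _ (inv_nonneg.mpr (abs_nonneg _))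
  have hX0 : (0:ℝ) ≤ (Nat.multinomial Finset.univ k : ℝ) * ∏ j, (|q j| * t ^ α j) ^ k j := by
    apply mul_nonneg (Nat.cast_nonneg _)
    exact Finset.prod_nonneg fun j _ => pow_nonneg
      (mul_nonneg (abs_nonneg _) (Real.rpow_pos_of_pos ht _).le) _
  have hA : (0:ℝ) ≤ ∑ j, α j * (k j : ℝ) :=
    Finset.sum_nonneg fun j _ => mul_nonneg (hα j).le (Nat.cast_nonneg _)
  nlinarith [hX0, hA]

lemma aux_split (G0 G1 a b S β γ T0 TS : ℝ)
    (hkey : (β + S) / G1 = 1 / G0) :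
    a * b / G1 * ((γ + S) * (T0 * TS)) =
      T0 * (a * (b * TS) / G0) + (γ - β) * T0 * (a * (b * TS) / G1) := by
  have h : (γ + S) / G1 = 1 / G0 + (γ - β) / G1 := by
    rw [← hkey, ← add_div]
    congr 1
    ring
  calc a * b / G1 * ((γ + S) * (T0 * TS))
      = (a * b * T0 * TS) * ((γ + S) / G1) := by ring
    _ = (a * b * T0 * TS) * (1 / G0 + (γ - β) / G1) := by rw [h]
    _ = T0 * (a * (b * TS) / G0) + (γ - β) * T0 * (a * (b * TS) / G1) := by ring

theorem mml_deriv_formula (m : ℕ) (α : Fin m → ℝ) (hα : ∀ j, 0 < α j)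
    (q : Fin m → ℝ) (β γ : ℝ) (t : ℝ) (ht : 0 < t) :
    HasDerivAt (fun s : ℝ => s ^ γ * mmlR α (β + 1) (fun j => q j * s ^ (α j)))
      (t ^ (γ - 1) * mmlR α β (fun j => q j * t ^ (α j))
        + (γ - β) * t ^ (γ - 1) * mmlR α (β + 1) (fun j => q j * t ^ (α j))) t := by
  classical
  have hA0 : ∀ k : Fin m → ℕ, (0:ℝ) ≤ ∑ j, α j * (k j : ℝ) := fun k =>
    Finset.sum_nonneg fun j _ => mul_nonneg (hα j).le (Nat.cast_nonneg _)
  set c : (Fin m → ℕ) → ℝ := fun k =>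
    (Nat.multinomial Finset.univ k : ℝ) * (∏ j, q j ^ k j) /
      Real.Gamma (β + 1 + ∑ j, α j * (k j : ℝ)) with hc
  set g : (Fin m → ℕ) → ℝ → ℝ := fun k s => c k * s ^ (γ + ∑ j, α j * (k j : ℝ)) with hgdef
  set g' : (Fin m → ℕ) → ℝ → ℝ := fun k s =>
    c k * ((γ + ∑ j, α j * (k j : ℝ)) * s ^ (γ + ∑ j, α j * (k j : ℝ) - 1)) with hg'def
  have htmem : t ∈ Set.Ioo (t/2) (2*t) := ⟨by linarith, by linarith⟩
  set M : ℝ := max ((t/2) ^ (γ-1)) ((2*t) ^ (γ-1)) with hM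
  set r : ℝ := max (2*t) 1 with hr
  have hr1 : (1:ℝ) ≤ r := le_max_right _ _
  have hr0 : (0:ℝ) < r := lt_of_lt_of_le one_pos hr1
  have hrt : 2*t ≤ r := le_max_left _ _
  have hM0 : 0 < M := lt_of_lt_of_le (Real.rpow_pos_of_pos (by linarith) (γ-1)) (le_max_left _ _)
  set u : (Fin m → ℕ) → ℝ := fun k =>
    M * ((Nat.multinomial Finset.univ k : ℝ) * (∏ j, (|q j| * r ^ α j) ^ k j) *
      (|γ| + ∑ j, α j * (k j : ℝ)) / |Real.Gamma (β + 1 + ∑ j, α j * (k j : ℝ))|) with hu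
  have husum : Summable u := (aux_summable_master α hα _
      (fun j => mul_nonneg (abs_nonneg _) (Real.rpow_pos_of_pos hr0 _).le)
      (β+1) |γ| (abs_nonneg _)).mul_left M
  -- derivative of each term
  have hgderiv : ∀ k : Fin m → ℕ, ∀ x ∈ Set.Ioo (t/2) (2*t), HasDerivAt (g k) (g' k x) x := by
    intro k x hx
    have hx0 : x ≠ 0 := ne_of_gt (lt_trans (by linarith) hx.1)
    exact (Real.hasDerivAt_rpow_const (p := γ + ∑ j, α j * (k j : ℝ))
      (Or.inl hx0)).const_mul (c k)
  -- bound on derivatives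
  have hbound : ∀ k : Fin m → ℕ, ∀ x ∈ Set.Ioo (t/2) (2*t), ‖g' k x‖ ≤ u k := by
    intro k x hx
    have hx0 : (0:ℝ) < x := lt_trans (by linarith) hx.1
    have hS := hA0 k
    have hxpow : x ^ (γ + (∑ j, α j * (k j : ℝ)) - 1)
        = x ^ (γ - 1) * x ^ (∑ j, α j * (k j : ℝ)) := by
      rw [← Real.rpow_add hx0]; congr 1; ring
    have hb1 : x ^ (γ - 1) ≤ M := by
      rcases le_or_gt 0 (γ - 1) with h | h
      · exact le_trans (Real.rpow_le_rpow hx0.le hx.2.le h) (le_max_right _ _)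
      · exact le_trans (Real.rpow_le_rpow_of_nonpos (by linarith) hx.1.le h.le)
          (le_max_left _ _)
    have hb2 : x ^ (∑ j, α j * (k j : ℝ)) ≤ r ^ (∑ j, α j * (k j : ℝ)) :=
      Real.rpow_le_rpow hx0.le (le_trans hx.2.le hrt) hS
    have hb3 : x ^ (γ + (∑ j, α j * (k j : ℝ)) - 1) ≤ M * r ^ (∑ j, α j * (k j : ℝ)) := by
      rw [hxpow]
      exact mul_le_mul hb1 hb2 (Real.rpow_pos_of_pos hx0 _).le hM0.le
    have hb4 : |γ + ∑ j, α j * (k j : ℝ)| ≤ |γ| + ∑ j, α j * (k j : ℝ) := by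
      calc |γ + ∑ j, α j * (k j : ℝ)| ≤ |γ| + |∑ j, α j * (k j : ℝ)| := abs_add_le _ _
        _ = |γ| + ∑ j, α j * (k j : ℝ) := by rw [abs_of_nonneg hS]
    have habsc : |c k| = (Nat.multinomial Finset.univ k : ℝ) * (∏ j, |q j| ^ k j) /
        |Real.Gamma (β + 1 + ∑ j, α j * (k j : ℝ))| := by
      rw [hc]
      rw [abs_div, abs_mul, abs_of_nonneg (Nat.cast_nonneg _), Finset.abs_prod]
      congr 2
      exact Finset.prod_congr rfl fun j _ => abs_pow _ _
    have hq0 : (0:ℝ) ≤ (Nat.multinomial Finset.univ k : ℝ) * (∏ j, |q j| ^ k j) /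
        |Real.Gamma (β + 1 + ∑ j, α j * (k j : ℝ))| := by
      apply div_nonneg _ (abs_nonneg _)
      exact mul_nonneg (Nat.cast_nonneg _)
        (Finset.prod_nonneg fun j _ => pow_nonneg (abs_nonneg _) _)
    calc ‖g' k x‖ = |c k| * (|γ + ∑ j, α j * (k j : ℝ)| *
          x ^ (γ + (∑ j, α j * (k j : ℝ)) - 1)) := by
          rw [hg'def, Real.norm_eq_abs, abs_mul, abs_mul,
            abs_of_pos (Real.rpow_pos_of_pos hx0 _)]
      _ ≤ ((Nat.multinomial Finset.univ k : ℝ) * (∏ j, |q j| ^ k j) /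
          |Real.Gamma (β + 1 + ∑ j, α j * (k j : ℝ))|) *
          ((|γ| + ∑ j, α j * (k j : ℝ)) * (M * r ^ (∑ j, α j * (k j : ℝ)))) := by
          rw [habsc]
          apply mul_le_mul_of_nonneg_left _ hq0
          apply mul_le_mul hb4 hb3 (Real.rpow_pos_of_pos hx0 _).le
          positivity
      _ = u k := by
          simp only [hu]
          rw [aux_prod_expand α (fun j => |q j|) hr0 k]
          ring
  -- summability at t of the two layers
  have h2 : Summable (fun k : Fin m → ℕ =>
      (Nat.multinomial Finset.univ k : ℝ) * (∏ j, (q j * t ^ α j) ^ k j) /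
        Real.Gamma (β + 1 + ∑ j, α j * (k j : ℝ))) := by
    have := aux_summable_terms α hα q (β+1) ht
    exact this
  have h1 : Summable (fun k : Fin m → ℕ =>
      (Nat.multinomial Finset.univ k : ℝ) * (∏ j, (q j * t ^ α j) ^ k j) /
        Real.Gamma (β + ∑ j, α j * (k j : ℝ))) := aux_summable_terms α hα q β ht
  have hg0 : Summable (fun k => g k t) := by
    apply Summable.congr (h2.mul_left (t ^ γ))
    intro k
    simp only [hgdef, hc]
    rw [aux_prod_expand α q ht k, Real.rpow_add ht]
    ring
  -- the tsum has the derivative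
  have hders : HasDerivAt (fun z => ∑' k, g k z) (∑' k, g' k t) t :=
    hasDerivAt_tsum_of_isPreconnected husum isOpen_Ioo (convex_Ioo _ _).isPreconnected
      hgderiv hbound htmem hg0 htmem
  -- our function agrees with the tsum near t
  have hfun_eq : (fun s : ℝ => s ^ γ * mmlR α (β + 1) (fun j => q j * s ^ (α j)))
      =ᶠ[nhds t] (fun z => ∑' k, g k z) := by
    filter_upwards [Ioi_mem_nhds ht] with s hs
    have hs0 : (0:ℝ) < s := hs
    rw [mmlR, ← tsum_mul_left]
    refine tsum_congr fun k => ?_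
    beta_reduce
    simp only [hgdef, hc]
    rw [aux_prod_expand α q hs0 k, Real.rpow_add hs0]
    ring
  -- identify the value of the derivative
  have hterm : ∀ k : Fin m → ℕ, g' k t =
      t ^ (γ-1) * ((Nat.multinomial Finset.univ k : ℝ) * (∏ j, (q j * t ^ α j) ^ k j) /
        Real.Gamma (β + ∑ j, α j * (k j : ℝ)))
      + (γ - β) * t ^ (γ-1) * ((Nat.multinomial Finset.univ k : ℝ) *
          (∏ j, (q j * t ^ α j) ^ k j) /
        Real.Gamma (β + 1 + ∑ j, α j * (k j : ℝ))) := by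
    intro k
    have hkey : (β + ∑ j, α j * (k j : ℝ)) / Real.Gamma (β + 1 + ∑ j, α j * (k j : ℝ))
        = 1 / Real.Gamma (β + ∑ j, α j * (k j : ℝ)) := by
      rw [show β + 1 + ∑ j, α j * (k j : ℝ) = (β + ∑ j, α j * (k j : ℝ)) + 1 by ring]
      exact aux_gamma_div _
    have hts : t ^ (γ + (∑ j, α j * (k j : ℝ)) - 1)
        = t ^ (γ - 1) * t ^ (∑ j, α j * (k j : ℝ)) := by
      rw [← Real.rpow_add ht]; congr 1; ring
    simp only [hg'def, hc]
    rw [hts, aux_prod_expand α q ht k]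
    exact aux_split _ _ _ _ _ _ _ _ _ hkey
  have hval : ∑' k, g' k t =
      t ^ (γ - 1) * mmlR α β (fun j => q j * t ^ (α j))
        + (γ - β) * t ^ (γ - 1) * mmlR α (β + 1) (fun j => q j * t ^ (α j)) := by
    calc ∑' k, g' k t
        = ∑' k : Fin m → ℕ,
          (t ^ (γ-1) * ((Nat.multinomial Finset.univ k : ℝ) *
              (∏ j, (q j * t ^ α j) ^ k j) / Real.Gamma (β + ∑ j, α j * (k j : ℝ)))
          + (γ - β) * t ^ (γ-1) * ((Nat.multinomial Finset.univ k : ℝ) *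
              (∏ j, (q j * t ^ α j) ^ k j) /
            Real.Gamma (β + 1 + ∑ j, α j * (k j : ℝ)))) := tsum_congr hterm
      _ = (∑' k : Fin m → ℕ, t ^ (γ-1) * ((Nat.multinomial Finset.univ k : ℝ) *
              (∏ j, (q j * t ^ α j) ^ k j) / Real.Gamma (β + ∑ j, α j * (k j : ℝ))))
          + ∑' k : Fin m → ℕ, (γ - β) * t ^ (γ-1) *
              ((Nat.multinomial Finset.univ k : ℝ) * (∏ j, (q j * t ^ α j) ^ k j) /
            Real.Gamma (β + 1 + ∑ j, α j * (k j : ℝ))) := by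
          apply Summable.tsum_add (h1.mul_left _)
          have := h2.mul_left ((γ - β) * t ^ (γ-1))
          apply this.congr
          intro k
          ring
      _ = t ^ (γ - 1) * mmlR α β (fun j => q j * t ^ (α j))
          + (γ - β) * t ^ (γ - 1) * mmlR α (β + 1) (fun j => q j * t ^ (α j)) := by
          rw [mmlR, mmlR, ← tsum_mul_left, ← tsum_mul_left]
  rw [← hval]
  exact hders.congr_of_eventuallyEq hfun_eq
end
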